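/- arXiv:2406.03561 — 3 statements merged into one kernel-verified Lean document; each statement's English description precedes it below -/
import Mathlib

section
/- Let G be a graph, and suppose for each vertex i and each neighbor j a weight p_i^j ∈ [0,1] is given with Σ_{j ∈ N(i)} p_i^j ≤ 1 (subunital weights). Then the graph energy satisfies E(G) ≥ 2 Σ_{(i,j) ∈ E(G)} √(p_i^j · p_j^i). -/
open Finset Matrix

noncomputable section

variable {V : Type*} [Fintype V] [DecidableEq V]

/-- The adjacency matrix of a simple graph is Hermitian (over ℝ). -/
theorem SimpleGraph.isHermitian_adjMatrix' (G : SimpleGraph V) [DecidableRel G.Adj] :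
    (G.adjMatrix ℝ).IsHermitian := by
  rw [Matrix.IsHermitian, Matrix.conjTranspose_eq_transpose_of_trivial]
  exact G.isSymm_adjMatrix

/-- The energy of a graph: the sum of the absolute values of the
eigenvalues of its adjacency matrix. -/
def SimpleGraph.energy (G : SimpleGraph V) [DecidableRel G.Adj] : ℝ :=
  ∑ k, |G.isHermitian_adjMatrix'.eigenvalues k|

/-- The Randić index of a graph: the sum over the (unordered) edges `(i,j)`
of `1/√(deg i · deg j)`. -/
def SimpleGraph.randic (G : SimpleGraph V) [DecidableRel G.Adj] : ℝ :=
  ∑ e ∈ G.edgeFinset,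
    Sym2.lift ⟨fun i j => 1 / Real.sqrt (G.degree i * G.degree j),
      fun i j => by simp [mul_comm]⟩ e

end

/-
Write `A = ∑ₖ λₖ vₖ vₖᵀ` for the spectral decomposition of the adjacency matrix and let `B` be the
symmetric matrix carrying `√(p i j · p j i)` on the edges. Then
`2 ∑_{ij ∈ E} √(p i j · p j i) = tr (A B) = ∑ₖ λₖ ⟨vₖ, B vₖ⟩ ≤ ∑ₖ |λₖ| = E(G)`, because the quadratic
form of `B` is bounded by `‖x‖²`: by AM-GM, `|xᵢ Bᵢⱼ xⱼ| ≤ (p i j xᵢ² + p j i xⱼ²) / 2`, and after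
symmetrising, the subunital row sums `∑ⱼ p i j ≤ 1` bound the total by `∑ᵢ xᵢ²`.
-/

namespace SimpleGraph

variable {V M R : Type*} [Fintype V] [DecidableEq V] [AddCommMonoid M] [NonAssocSemiring R]
  (G : SimpleGraph V) [DecidableRel G.Adj]

theorem sum_darts_eq_sum_sum_neighborFinset (f : V → V → M) :
    ∑ d : G.Dart, f d.fst d.snd = ∑ v, ∑ w ∈ G.neighborFinset v, f v w := by
  rw [← sum_fiberwise univ (fun d : G.Dart => d.fst)]
  refine sum_congr rfl fun v _ => ?_
  rw [G.dart_fst_fiber v, sum_image fun _ _ _ _ h => G.dartOfNeighborSet_injective v h,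
    sum_subtype (G.neighborFinset v) (fun w => G.mem_neighborFinset v w)]
  rfl

theorem sum_darts_eq_two_nsmul_sum_edgeFinset (f : V → V → M) (hf : ∀ v w, f v w = f w v) :
    ∑ d : G.Dart, f d.fst d.snd = 2 • ∑ e ∈ G.edgeFinset, Sym2.lift ⟨f, hf⟩ e := by
  rw [← sum_fiberwise_of_maps_to (g := Dart.edge)
    (fun d _ => mem_edgeFinset.2 d.edge_mem), smul_sum]
  refine sum_congr rfl fun e he => ?_
  induction e with
  | _ v w =>
    let d : G.Dart := ⟨(v, w), mem_edgeFinset.1 he⟩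
    rw [show ({d' : G.Dart | d'.edge = s(v, w)} : Finset _) = {d, d.symm} from d.edge_fiber,
      sum_pair d.symm_ne.symm, two_nsmul]
    simp [d, hf w v]

theorem sum_sum_neighborFinset_eq_two_mul_sum_edgeFinset (f : V → V → R)
    (hf : ∀ v w, f v w = f w v) :
    ∑ v, ∑ w ∈ G.neighborFinset v, f v w = 2 * ∑ e ∈ G.edgeFinset, Sym2.lift ⟨f, hf⟩ e := by
  rw [← sum_darts_eq_sum_sum_neighborFinset, sum_darts_eq_two_nsmul_sum_edgeFinset G f hf,
    two_nsmul, two_mul]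

end SimpleGraph

namespace Matrix

variable {n : Type*} [Fintype n]

theorem abs_dotProduct_mulVec_le_of_abs_apply_le_sqrt (w : n → n → ℝ)
    (hw0 : ∀ i j, 0 ≤ w i j) (hw1 : ∀ i, ∑ j, w i j ≤ 1) (B : Matrix n n ℝ)
    (hB : ∀ i j, |B i j| ≤ √(w i j * w j i)) (x : n → ℝ) :
    |x ⬝ᵥ B *ᵥ x| ≤ x ⬝ᵥ x := by
  have amgm : ∀ i j, |x i * B i j * x j| ≤ (w i j * x i ^ 2 + w j i * x j ^ 2) / 2 := by
    intro i j
    have h := two_mul_le_add_sq (√(w i j) * |x i|) (√(w j i) * |x j|)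
    rw [mul_pow, mul_pow, Real.sq_sqrt (hw0 i j), Real.sq_sqrt (hw0 j i), sq_abs, sq_abs] at h
    calc |x i * B i j * x j| = |x i| * |B i j| * |x j| := by rw [abs_mul, abs_mul]
      _ ≤ |x i| * √(w i j * w j i) * |x j| := by gcongr; exact hB i j
      _ = √(w i j) * |x i| * (√(w j i) * |x j|) := by
        rw [Real.sqrt_mul (hw0 i j)]; ring
      _ ≤ _ := by linarith
  calc |x ⬝ᵥ B *ᵥ x| = |∑ i, ∑ j, x i * B i j * x j| := by
        simp only [dotProduct, mulVec, mul_sum, mul_assoc]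
    _ ≤ ∑ i, ∑ j, |x i * B i j * x j| :=
        (abs_sum_le_sum_abs _ _).trans (sum_le_sum fun i _ => abs_sum_le_sum_abs _ _)
    _ ≤ ∑ i, ∑ j, (w i j * x i ^ 2 + w j i * x j ^ 2) / 2 :=
        sum_le_sum fun i _ => sum_le_sum fun j _ => amgm i j
    _ = ∑ i, x i ^ 2 * ∑ j, w i j := by
        simp only [← sum_div, sum_add_distrib]
        rw [sum_comm (f := fun i j => w j i * x j ^ 2)]
        simp only [sum_mul, mul_comm]
        ring
    _ ≤ ∑ i, x i ^ 2 :=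
        sum_le_sum fun i _ => mul_le_of_le_one_right (sq_nonneg _) (hw1 i)
    _ = x ⬝ᵥ x := by simp only [dotProduct, sq]

variable [DecidableEq n] {A : Matrix n n ℝ}

theorem IsHermitian.trace_mul_eq_sum_eigenvalues_mul (hA : A.IsHermitian) (B : Matrix n n ℝ) :
    (A * B).trace = ∑ k, hA.eigenvalues k *
      (hA.eigenvectorBasis k ⬝ᵥ B *ᵥ hA.eigenvectorBasis k) := by
  set U : Matrix n n ℝ := (hA.eigenvectorUnitary : Matrix n n ℝ)
  have hUUt : U * Uᵀ = 1 := by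
    simpa [U, star_eq_conjTranspose] using mem_unitaryGroup_iff.mp hA.eigenvectorUnitary.2
  calc (A * B).trace = (Uᵀ * (B * A) * U).trace := by
        rw [trace_mul_cycle, hUUt, Matrix.one_mul, trace_mul_comm]
    _ = _ := by
        refine sum_congr rfl fun k _ => ?_
        rw [diag_apply, ← smul_eq_mul (hA.eigenvalues k), ← dotProduct_smul, ← mulVec_smul,
          ← hA.mulVec_eigenvectorBasis, mulVec_mulVec]
        simp only [U, mul_apply, transpose_apply, eigenvectorUnitary_apply, dotProduct, mulVec,
          sum_mul, mul_sum, mul_assoc]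
        exact sum_comm

theorem IsHermitian.trace_mul_le_sum_abs_eigenvalues (hA : A.IsHermitian) (B : Matrix n n ℝ)
    (hB : ∀ x, |x ⬝ᵥ B *ᵥ x| ≤ x ⬝ᵥ x) :
    (A * B).trace ≤ ∑ k, |hA.eigenvalues k| := by
  rw [hA.trace_mul_eq_sum_eigenvalues_mul]
  refine sum_le_sum fun k _ => ?_
  have hunit : hA.eigenvectorBasis k ⬝ᵥ hA.eigenvectorBasis k = 1 := by
    have h : inner ℝ (hA.eigenvectorBasis k) (hA.eigenvectorBasis k) = 1 := by
      rw [real_inner_self_eq_norm_sq, hA.eigenvectorBasis.orthonormal.1 k, one_pow]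
    simpa only [EuclideanSpace.inner_eq_star_dotProduct, star_trivial] using h
  calc _ ≤ |hA.eigenvalues k| * |hA.eigenvectorBasis k ⬝ᵥ B *ᵥ hA.eigenvectorBasis k| := by
        rw [← abs_mul]; exact le_abs_self _
    _ ≤ |hA.eigenvalues k| := mul_le_of_le_one_right (abs_nonneg _) ((hB _).trans hunit.le)

end Matrix

/-- If to every vertex `i` and every neighbour `j` of `i` a weight `p i j ∈ [0,1]` is
assigned, with the weights at each vertex summing to at most `1` (subunital weights),
then `E(G) ≥ 2 ∑_{(i,j) ∈ E(G)} √(p i j · p j i)`. -/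
theorem stmt2 {V : Type*} [Fintype V] [DecidableEq V]
    (G : SimpleGraph V) [DecidableRel G.Adj]
    (p : V → V → ℝ)
    (hp0 : ∀ i j, G.Adj i j → 0 ≤ p i j)
    (hsum : ∀ i, ∑ j ∈ G.neighborFinset i, p i j ≤ 1) :
    2 * ∑ e ∈ G.edgeFinset,
        Sym2.lift ⟨fun i j => Real.sqrt (p i j * p j i),
          fun i j => by simp [mul_comm]⟩ e
      ≤ G.energy := by
  set w : V → V → ℝ := fun i j => if G.Adj i j then p i j else 0
  set B : Matrix V V ℝ := Matrix.of fun i j => √(w i j * w j i)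
  have hB : ∀ x, |x ⬝ᵥ B *ᵥ x| ≤ x ⬝ᵥ x := by
    refine Matrix.abs_dotProduct_mulVec_le_of_abs_apply_le_sqrt w (fun i j => ?_) (fun i => ?_) B
      (fun i j => (abs_of_nonneg (Real.sqrt_nonneg _)).le)
    · by_cases h : G.Adj i j <;> simp [w, h, hp0 i j]
    · simpa [w, SimpleGraph.neighborFinset_eq_filter, sum_filter] using hsum i
  have htrace : (G.adjMatrix ℝ * B).trace = ∑ v, ∑ u ∈ G.neighborFinset v, √(p v u * p u v) := by
    refine sum_congr rfl fun v _ => ?_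
    rw [Matrix.diag_apply, G.adjMatrix_mul_apply]
    refine sum_congr rfl fun u hu => ?_
    have h : G.Adj v u := (G.mem_neighborFinset v u).1 hu
    simp [B, w, h, h.symm, mul_comm]
  rw [← G.sum_sum_neighborFinset_eq_two_mul_sum_edgeFinset, ← htrace]
  exact G.isHermitian_adjMatrix'.trace_mul_le_sum_abs_eigenvalues B hB
end

section
/- Let G be a graph and H any subgraph of G (not necessarily induced). Then E(G) ≥ 2R(H), where R(H) is the Randić index of H computed with degrees in H. -/
open Finset Matrix

/-!
Write the adjacency matrix as `A = ∑ₖ λₖ bₖ bₖᵀ` and let `e v = ∑ₖ |λₖ| bₖ(v)²` be the diagonal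
of `|A|`, so that `∑ᵥ e v = E(G)`. Cauchy–Schwarz gives `|A u v| ≤ √(e u) √(e v)`, hence
`1 ≤ √(e u) √(e v)` on every edge of `G`, in particular on every edge of `H`. By AM–GM,
`1 / √(d u d v) ≤ (e u / d u + e v / d v) / 2` for the `H`-degrees `d`; summing over the darts of `H`,
each vertex `u` is the tail of `d u` darts, so `2 R(H) ≤ ∑ᵥ e v = E(G)`.
-/

lemma one_div_sqrt_mul_le_add_div_two {a b x y : ℝ} (ha : 0 ≤ a) (hb : 0 ≤ b) (hx : 0 < x)
    (hy : 0 < y) (h : 1 ≤ √a * √b) : 1 / √(x * y) ≤ (a / x + b / y) / 2 := by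
  have hxy : 0 < √(x * y) := Real.sqrt_pos.mpr (mul_pos hx hy)
  calc 1 / √(x * y) ≤ √a * √b / √(x * y) := by gcongr
    _ = √(a / x) * √(b / y) := by
        rw [Real.sqrt_div ha, Real.sqrt_div hb, Real.sqrt_mul hx.le]; ring
    _ ≤ (a / x + b / y) / 2 := by
        nlinarith [sq_nonneg (√(a / x) - √(b / y)), Real.sq_sqrt (div_nonneg ha hx.le),
          Real.sq_sqrt (div_nonneg hb hy.le)]

namespace Matrix.IsHermitian

variable {n : Type*} [Fintype n] [DecidableEq n] {A : Matrix n n ℝ} (hA : A.IsHermitian)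

lemma apply_eq_sum_eigenvalues (i j : n) :
    A i j = ∑ k, hA.eigenvalues k * hA.eigenvectorBasis k i * hA.eigenvectorBasis k j := by
  conv_lhs => rw [hA.spectral_theorem, Unitary.conjStarAlgAut_apply]
  simp only [mul_apply, star_apply, diagonal_apply, eigenvectorUnitary_apply, mul_ite, mul_zero,
    Finset.sum_ite_eq', Finset.mem_univ, if_true, Function.comp_apply, RCLike.ofReal_real_eq_id,
    id_eq, star_trivial]
  exact Finset.sum_congr rfl fun k _ => by ring

lemma sum_sq_eigenvectorBasis_apply (k : n) : ∑ i, hA.eigenvectorBasis k i ^ 2 = 1 := by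
  have := EuclideanSpace.norm_sq_eq (hA.eigenvectorBasis k)
  simpa [hA.eigenvectorBasis.orthonormal.1 k, sq_abs] using this.symm

noncomputable def absDiag (i : n) : ℝ := ∑ k, |hA.eigenvalues k| * hA.eigenvectorBasis k i ^ 2

lemma absDiag_nonneg (i : n) : 0 ≤ hA.absDiag i :=
  Finset.sum_nonneg fun _ _ => by positivity

lemma sum_absDiag : ∑ i, hA.absDiag i = ∑ k, |hA.eigenvalues k| := by
  simp only [absDiag]
  rw [Finset.sum_comm]
  simp [← Finset.mul_sum, sum_sq_eigenvectorBasis_apply]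

lemma abs_apply_le_sqrt_absDiag_mul_sqrt_absDiag (i j : n) :
    |A i j| ≤ √(hA.absDiag i) * √(hA.absDiag j) := by
  set b := hA.eigenvectorBasis
  set s : n → ℝ := fun k => √|hA.eigenvalues k|
  calc |A i j| = |∑ k, hA.eigenvalues k * b k i * b k j| := by rw [hA.apply_eq_sum_eigenvalues]
    _ ≤ ∑ k, |hA.eigenvalues k * b k i * b k j| := Finset.abs_sum_le_sum_abs _ _
    _ = ∑ k, (s k * |b k i|) * (s k * |b k j|) := by
        refine Finset.sum_congr rfl fun k _ => ?_
        rw [abs_mul, abs_mul, ← Real.mul_self_sqrt (abs_nonneg (hA.eigenvalues k))]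
        ring
    _ ≤ √(∑ k, (s k * |b k i|) ^ 2) * √(∑ k, (s k * |b k j|) ^ 2) :=
        Real.sum_mul_le_sqrt_mul_sqrt _ _ _
    _ = √(hA.absDiag i) * √(hA.absDiag j) := by
        simp only [absDiag, mul_pow, s, b, Real.sq_sqrt (abs_nonneg _), sq_abs]

end Matrix.IsHermitian

namespace SimpleGraph

variable {V : Type*} [Fintype V] (G : SimpleGraph V) [DecidableRel G.Adj]

lemma energy_eq_sum_absDiag [DecidableEq V] :
    G.energy = ∑ v, G.isHermitian_adjMatrix'.absDiag v :=
  (G.isHermitian_adjMatrix'.sum_absDiag).symm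

lemma one_le_sqrt_absDiag_mul_sqrt_absDiag [DecidableEq V] {u v : V} (h : G.Adj u v) :
    1 ≤ √(G.isHermitian_adjMatrix'.absDiag u) * √(G.isHermitian_adjMatrix'.absDiag v) := by
  simpa [h] using G.isHermitian_adjMatrix'.abs_apply_le_sqrt_absDiag_mul_sqrt_absDiag u v

lemma sum_darts_edge [DecidableEq V] {M : Type*} [AddCommMonoid M] (f : Sym2 V → M) :
    ∑ d : G.Dart, f d.edge = 2 • ∑ e ∈ G.edgeFinset, f e := by
  rw [← Finset.sum_fiberwise_of_maps_to (g := Dart.edge) (t := G.edgeFinset)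
    (fun d _ => G.mem_edgeFinset.mpr d.edge_mem), Finset.smul_sum]
  refine Finset.sum_congr rfl fun e he => ?_
  rw [Finset.sum_congr rfl fun d hd => congrArg f (Finset.mem_filter.mp hd).2, Finset.sum_const,
    G.dart_edge_fiber_card e (G.mem_edgeFinset.mp he)]

lemma sum_darts_fst [DecidableEq V] {M : Type*} [AddCommMonoid M] (f : V → M) :
    ∑ d : G.Dart, f d.fst = ∑ v, G.degree v • f v := by
  rw [← Finset.sum_fiberwise_of_maps_to (g := fun d => d.fst) (t := univ) (fun _ _ => mem_univ _)]
  refine Finset.sum_congr rfl fun v _ => ?_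
  rw [Finset.sum_congr rfl fun d hd => congrArg f (Finset.mem_filter.mp hd).2, Finset.sum_const,
    G.dart_fst_fiber_card_eq_degree v]

lemma sum_darts_snd {M : Type*} [AddCommMonoid M] (f : V → M) :
    ∑ d : G.Dart, f d.snd = ∑ d : G.Dart, f d.fst :=
  Fintype.sum_equiv (Function.Involutive.toPerm _ Dart.symm_symm) _ _ fun _ => rfl

lemma two_mul_randic :
    2 * G.randic = ∑ d : G.Dart, 1 / √(G.degree d.fst * G.degree d.snd) := by
  classical
  rw [randic, ← Nat.cast_ofNat, ← nsmul_eq_mul, ← sum_darts_edge]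
  rfl

theorem two_mul_randic_le_sum {w : V → ℝ} (hw : ∀ v, 0 ≤ w v)
    (hadj : ∀ u v, G.Adj u v → 1 ≤ √(w u) * √(w v)) : 2 * G.randic ≤ ∑ v, w v := by
  set f : V → ℝ := fun v => w v / G.degree v
  have hdeg {u v : V} (h : G.Adj u v) : (0 : ℝ) < G.degree u :=
    Nat.cast_pos.mpr (G.degree_pos_iff_exists_adj u |>.mpr ⟨v, h⟩)
  calc 2 * G.randic ≤ ∑ d : G.Dart, (f d.fst + f d.snd) / 2 := by
        rw [two_mul_randic]
        exact Finset.sum_le_sum fun d _ => one_div_sqrt_mul_le_add_div_two (hw _) (hw _)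
          (hdeg d.adj) (hdeg d.adj.symm) (hadj _ _ d.adj)
    _ = ∑ v, G.degree v • f v := by
        classical
        rw [← Finset.sum_div, Finset.sum_add_distrib, sum_darts_snd, sum_darts_fst]; ring
    _ ≤ ∑ v, w v := by
        refine Finset.sum_le_sum fun v _ => ?_
        rcases eq_or_ne (G.degree v) 0 with h0 | h0
        · simpa [h0] using hw v
        · have hd : (G.degree v : ℝ) ≠ 0 := Nat.cast_ne_zero.mpr h0
          simp [f, nsmul_eq_mul, mul_div_cancel₀ _ hd]

end SimpleGraph

/-- For any subgraph `H` of `G` (not necessarily induced), `E(G) ≥ 2 R(H)`,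
where the Randić index of `H` is computed with degrees in `H`. -/
theorem stmt4 {V : Type*} [Fintype V] [DecidableEq V]
    (G H : SimpleGraph V) [DecidableRel G.Adj] [DecidableRel H.Adj]
    (hHG : H ≤ G) :
    2 * H.randic ≤ G.energy := by
  rw [G.energy_eq_sum_absDiag]
  exact H.two_mul_randic_le_sum (G.isHermitian_adjMatrix'.absDiag_nonneg)
    fun u v huv => G.one_le_sqrt_absDiag_mul_sqrt_absDiag (hHG huv)
end

section
/- Let G be a graph containing a subgraph H on k vertices such that H is a disjoint union of regular graphs, each of positive degree. Then E(G) ≥ k. -/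
/-! Let `N = D^{-1/2} A_H D^{-1/2}` be the normalized adjacency matrix of `H`. AM–GM on each edge
gives `|uᵀ N u| ≤ uᵀ u`, so expanding `A_G = ∑ λₖ vₖ vₖᵀ` in an orthonormal eigenbasis yields
`tr (A_G N) = ∑ λₖ vₖᵀ N vₖ ≤ ∑ |λₖ| = E(G)`. As `N` is supported on the edges of `H ≤ G`,
`tr (A_G N) = ∑ᵢⱼ Nᵢⱼ = 2 R(H)`; when degrees agree along edges, row `i` of `N` sums to `1`
if `i` is not isolated in `H`, so `2 R(H) = k`. -/

open Finset Matrix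

namespace Matrix.IsHermitian

variable {n : Type*} [Fintype n] [DecidableEq n] {A : Matrix n n ℝ}

theorem trace_mul_eq_sum_eigenvalues_mul_s6 (hA : A.IsHermitian) (B : Matrix n n ℝ) :
    (A * B).trace =
      ∑ k, hA.eigenvalues k * (hA.eigenvectorBasis k ⬝ᵥ B *ᵥ hA.eigenvectorBasis k) := by
  have hdiag (k : n) : (star (hA.eigenvectorUnitary : Matrix n n ℝ) * B * hA.eigenvectorUnitary) k k
      = hA.eigenvectorBasis k ⬝ᵥ B *ᵥ hA.eigenvectorBasis k := by
    simp only [mul_apply, star_apply, star_trivial, eigenvectorUnitary_apply, dotProduct,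
      mulVec, sum_mul, mul_sum]
    rw [sum_comm]
    exact sum_congr rfl fun _ _ ↦ sum_congr rfl fun _ _ ↦ by ring
  conv_lhs => rw [hA.spectral_theorem, Unitary.conjStarAlgAut_apply]
  rw [mul_assoc, trace_mul_comm, ← mul_assoc]
  simp only [trace, diag_apply, mul_diagonal, Function.comp_apply, RCLike.ofReal_real_eq_id,
    id]
  exact sum_congr rfl fun k _ ↦ by rw [hdiag, mul_comm]

theorem trace_mul_le_sum_abs_eigenvalues_s6 (hA : A.IsHermitian) {B : Matrix n n ℝ}
    (hB : ∀ u, |u ⬝ᵥ B *ᵥ u| ≤ u ⬝ᵥ u) : (A * B).trace ≤ ∑ k, |hA.eigenvalues k| := by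
  rw [hA.trace_mul_eq_sum_eigenvalues_mul_s6]
  refine sum_le_sum fun k _ ↦ ?_
  set v := hA.eigenvectorBasis k
  have hv : v ⬝ᵥ v = 1 := by
    have h := hA.eigenvectorBasis.inner_eq_one k
    rwa [EuclideanSpace.inner_eq_star_dotProduct, star_trivial] at h
  calc hA.eigenvalues k * (v ⬝ᵥ B *ᵥ v) ≤ |hA.eigenvalues k| * |v ⬝ᵥ B *ᵥ v| :=
        (le_abs_self _).trans (abs_mul _ _).le
    _ ≤ |hA.eigenvalues k| * 1 := by
        gcongr
        exact (hB v).trans_eq hv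
    _ = |hA.eigenvalues k| := mul_one _

end Matrix.IsHermitian

namespace SimpleGraph

variable {V : Type*} [Fintype V]

theorem two_nsmul_sum_edgeFinset_lift {M : Type*} [AddCommMonoid M] (G : SimpleGraph V)
    [DecidableRel G.Adj] (f : { f : V → V → M // ∀ a b, f a b = f b a }) :
    2 • ∑ e ∈ G.edgeFinset, Sym2.lift f e = ∑ i, ∑ j, if G.Adj i j then f.1 i j else 0 := by
  classical
  have hdarts : ∑ d : G.Dart, f.1 d.fst d.snd = ∑ i, ∑ j, if G.Adj i j then f.1 i j else 0 := by
    rw [← sum_product', ← sum_filter]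
    refine sum_bij' (fun d _ ↦ (d.fst, d.snd)) (fun p hp ↦ ⟨p, (mem_filter.1 hp).2⟩)
      ?_ ?_ ?_ ?_ ?_ <;> simp
  rw [← hdarts, ← sum_fiberwise_of_maps_to (g := Dart.edge) (t := G.edgeFinset)
    (fun d _ ↦ mem_edgeFinset.2 d.edge_mem), smul_sum]
  refine sum_congr rfl fun e he ↦ ?_
  obtain ⟨d, rfl⟩ : ∃ d : G.Dart, d.edge = e := by
    induction e using Sym2.ind with
    | h a b => exact ⟨⟨(a, b), mem_edgeFinset.1 he⟩, rfl⟩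
  rw [d.edge_fiber, sum_pair d.symm_ne.symm, two_nsmul]
  exact congrArg₂ (· + ·) rfl (f.2 _ _)

theorem abs_dotProduct_adjMatrix_mulVec_le (G : SimpleGraph V) [DecidableRel G.Adj]
    (w : V → ℝ) : |w ⬝ᵥ G.adjMatrix ℝ *ᵥ w| ≤ ∑ i, G.degree i * w i ^ 2 := by
  have hrow : ∑ i, ∑ j, (if G.Adj i j then w i ^ 2 else 0) = ∑ i, G.degree i * w i ^ 2 := by
    simp_rw [G.degree_eq_sum_if_adj (R := ℝ), sum_mul, ite_mul, one_mul, zero_mul]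
  have hcol : ∑ i, ∑ j, (if G.Adj i j then w j ^ 2 else 0) = ∑ i, G.degree i * w i ^ 2 := by
    rw [sum_comm, ← hrow]
    simp_rw [G.adj_comm]
  rw [dotProduct_mulVec_adjMatrix]
  calc |∑ i, ∑ j, if G.Adj i j then w i * w j else 0|
      ≤ ∑ i, ∑ j, |if G.Adj i j then w i * w j else 0| :=
        (abs_sum_le_sum_abs _ _).trans (sum_le_sum fun i _ ↦ abs_sum_le_sum_abs _ _)
    _ ≤ ∑ i, ∑ j,
          ((if G.Adj i j then w i ^ 2 else 0) + (if G.Adj i j then w j ^ 2 else 0)) / 2 := by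
        gcongr with i _ j _
        split_ifs
        · rw [abs_mul]
          linarith [two_mul_le_add_sq |w i| |w j|, sq_abs (w i), sq_abs (w j)]
        · simp
    _ = ∑ i, G.degree i * w i ^ 2 := by
        simp_rw [← sum_div, sum_add_distrib, hrow, hcol]
        ring

noncomputable def normAdjMatrix (G : SimpleGraph V) [DecidableRel G.Adj] : Matrix V V ℝ :=
  of fun i j ↦ if G.Adj i j then 1 / √(G.degree i * G.degree j) else 0

theorem abs_dotProduct_normAdjMatrix_mulVec_le (G : SimpleGraph V) [DecidableRel G.Adj]
    (u : V → ℝ) : |u ⬝ᵥ G.normAdjMatrix *ᵥ u| ≤ u ⬝ᵥ u := by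
  set w : V → ℝ := fun i ↦ u i / √(G.degree i)
  have hw : u ⬝ᵥ G.normAdjMatrix *ᵥ u = w ⬝ᵥ G.adjMatrix ℝ *ᵥ w := by
    rw [dotProduct_mulVec_adjMatrix]
    simp only [dotProduct, mulVec, normAdjMatrix, of_apply, mul_sum]
    refine sum_congr rfl fun i _ ↦ sum_congr rfl fun j _ ↦ ?_
    split_ifs
    · rw [Real.sqrt_mul (Nat.cast_nonneg _)]
      ring
    · ring
  calc |u ⬝ᵥ G.normAdjMatrix *ᵥ u| ≤ ∑ i, G.degree i * w i ^ 2 :=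
        hw ▸ G.abs_dotProduct_adjMatrix_mulVec_le w
    _ ≤ ∑ i, u i * u i := by
        refine sum_le_sum fun i _ ↦ ?_
        rw [div_pow, Real.sq_sqrt (Nat.cast_nonneg _), ← sq]
        rcases eq_or_ne (G.degree i : ℝ) 0 with h | h
        · simp [h, sq_nonneg]
        · rw [mul_div_cancel₀ _ h]

theorem two_mul_randic_eq_sum_normAdjMatrix (G : SimpleGraph V) [DecidableRel G.Adj] :
    2 * G.randic = ∑ i, ∑ j, G.normAdjMatrix i j := by
  rw [randic, two_mul, ← two_nsmul, two_nsmul_sum_edgeFinset_lift]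
  rfl

theorem trace_adjMatrix_mul_normAdjMatrix {G H : SimpleGraph V} [DecidableRel G.Adj]
    [DecidableRel H.Adj] (hHG : H ≤ G) :
    (G.adjMatrix ℝ * H.normAdjMatrix).trace = 2 * H.randic := by
  rw [two_mul_randic_eq_sum_normAdjMatrix, trace]
  simp only [diag_apply, mul_apply]
  rw [sum_comm]
  refine sum_congr rfl fun i _ ↦ sum_congr rfl fun j _ ↦ ?_
  by_cases h : H.Adj i j
  · simp [adjMatrix_apply, (hHG h).symm]
  · simp [normAdjMatrix, h]

theorem two_mul_randic_le_energy [DecidableEq V] {G H : SimpleGraph V} [DecidableRel G.Adj]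
    [DecidableRel H.Adj] (hHG : H ≤ G) : 2 * H.randic ≤ G.energy :=
  trace_adjMatrix_mul_normAdjMatrix hHG ▸
    G.isHermitian_adjMatrix'.trace_mul_le_sum_abs_eigenvalues_s6
      H.abs_dotProduct_normAdjMatrix_mulVec_le

theorem two_mul_randic_eq_card_of_degree_eq (G : SimpleGraph V) [DecidableRel G.Adj]
    (hreg : ∀ i j, G.Adj i j → G.degree i = G.degree j) :
    2 * G.randic = #{i | G.degree i ≠ 0} := by
  rw [two_mul_randic_eq_sum_normAdjMatrix, natCast_card_filter]
  refine sum_congr rfl fun i _ ↦ ?_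
  have hrow : ∑ j, G.normAdjMatrix i j
      = ∑ j, (if G.Adj i j then 1 else 0) * (G.degree i : ℝ)⁻¹ := by
    refine sum_congr rfl fun j _ ↦ ?_
    by_cases h : G.Adj i j
    · rw [normAdjMatrix, of_apply, if_pos h, if_pos h, ← hreg i j h,
        Real.sqrt_mul_self (Nat.cast_nonneg _), one_div, one_mul]
    · simp [normAdjMatrix, h]
  rw [hrow, ← sum_mul, ← G.degree_eq_sum_if_adj]
  split_ifs with h
  · exact mul_inv_cancel₀ (Nat.cast_ne_zero.2 h)
  · simp [not_not.1 h]

end SimpleGraph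

/-- If `G` contains a subgraph `H` on `k` vertices (the set `S`) that is a disjoint
union of regular graphs each of positive degree (i.e. every vertex of `S` has positive
degree in `H`, vertices outside `S` are isolated in `H`, and degrees in `H` are
constant on connected components of `H`), then `E(G) ≥ k`. -/
theorem stmt6 {V : Type*} [Fintype V] [DecidableEq V]
    (G H : SimpleGraph V) [DecidableRel G.Adj] [DecidableRel H.Adj]
    (hHG : H ≤ G) (S : Finset V) (k : ℕ) (hk : S.card = k)
    (hpos : ∀ i ∈ S, 0 < H.degree i)
    (hiso : ∀ i ∉ S, H.degree i = 0)
    (hreg : ∀ i j : V, H.Reachable i j → H.degree i = H.degree j) :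
    (k : ℝ) ≤ G.energy := by
  have hS : S = ({i | H.degree i ≠ 0} : Finset V) := by
    ext i
    by_cases hi : i ∈ S
    · simp [hi, (hpos i hi).ne']
    · simp [hi, hiso i hi]
  calc (k : ℝ) = 2 * H.randic := by
        rw [H.two_mul_randic_eq_card_of_degree_eq fun i j h ↦ hreg i j h.reachable, ← hS, hk]
    _ ≤ G.energy := SimpleGraph.two_mul_randic_le_energy hHG
end
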